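/- arXiv:1503.02309 — 2 statements merged into one kernel-verified Lean document; each statement's English description precedes it below -/
import Mathlib

section
/- Let A be a noetherian commutative pointed monoid and I an ideal of A with a minimal primary decomposition I = q₁ ∩ ⋯ ∩ qₙ where qᵢ is pᵢ-primary. Then {p₁, …, pₙ} is exactly the set of prime ideals of A that occur among the ideal quotients (I : a) = {b ∈ A : ab ∈ I} as a ranges over A. -/
/-- An ideal of a commutative pointed monoid `A`. -/
def IsMIdeal {A : Type*} [CommMonoidWithZero A] (I : Set A) : Prop :=
  (0 : A) ∈ I ∧ ∀ a x : A, x ∈ I → a * x ∈ I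

/-- A commutative pointed monoid is noetherian if every ascending chain of ideals
stabilizes. -/
def MonNoetherian (A : Type*) [CommMonoidWithZero A] : Prop :=
  ∀ c : ℕ → Set A, (∀ n, IsMIdeal (c n)) → (∀ n, c n ⊆ c (n + 1)) →
    ∃ N, ∀ m, N ≤ m → c m = c N

/-- A prime ideal of a commutative pointed monoid. -/
def IsMPrime {A : Type*} [CommMonoidWithZero A] (p : Set A) : Prop :=
  IsMIdeal p ∧ p ≠ Set.univ ∧ ∀ a b : A, a * b ∈ p → a ∈ p ∨ b ∈ p

/-- A primary ideal of a commutative pointed monoid. -/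
def IsMPrimary {A : Type*} [CommMonoidWithZero A] (q : Set A) : Prop :=
  IsMIdeal q ∧ q ≠ Set.univ ∧ ∀ x y : A, x * y ∈ q → x ∈ q ∨ ∃ n : ℕ, 1 ≤ n ∧ y ^ n ∈ q

/-- The radical of an ideal: all `a` with `a ^ n ∈ I` for some `n ≥ 1`. -/
def mRadical {A : Type*} [CommMonoidWithZero A] (I : Set A) : Set A :=
  {a : A | ∃ n : ℕ, 1 ≤ n ∧ a ^ n ∈ I}

section Helpers

variable {A : Type*} [CommMonoidWithZero A]

lemma colon_isMIdeal {I : Set A} (hI : IsMIdeal I) (a : A) :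
    IsMIdeal {b : A | a * b ∈ I} := by
  constructor
  · show a * 0 ∈ I
    rw [mul_zero]; exact hI.1
  · intro c x hx
    show a * (c * x) ∈ I
    rw [mul_left_comm]; exact hI.2 c _ hx

lemma one_not_mem_prime {P : Set A} (hP : IsMPrime P) : (1 : A) ∉ P := by
  intro h1
  apply hP.2.1
  ext b
  simp only [Set.mem_univ, iff_true]
  have := hP.1.2 b 1 h1
  rwa [mul_one] at this

lemma prime_pow_mem {P : Set A} (hP : IsMPrime P) :
    ∀ (m : ℕ) (x : A), 1 ≤ m → x ^ m ∈ P → x ∈ P := by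
  intro m
  induction m with
  | zero => intro x h; omega
  | succ k ih =>
    intro x _ hx
    rw [pow_succ] at hx
    rcases hP.2.2 _ _ hx with h | h
    · rcases Nat.eq_zero_or_pos k with rfl | hk
      · rw [pow_zero] at h; exact absurd h (one_not_mem_prime hP)
      · exact ih x hk h
    · exact h

lemma prod_mem_prime {P : Set A} (hP : IsMPrime P) {ι : Type*} (s : Finset ι)
    (f : ι → A) (h : ∏ i ∈ s, f i ∈ P) : ∃ i ∈ s, f i ∈ P := by
  classical
  induction s using Finset.induction with
  | empty =>
    rw [Finset.prod_empty] at h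
    exact absurd h (one_not_mem_prime hP)
  | @insert j t hni ih =>
    rw [Finset.prod_insert hni] at h
    rcases hP.2.2 _ _ h with h | h
    · exact ⟨j, Finset.mem_insert_self j t, h⟩
    · obtain ⟨i, hi, hfi⟩ := ih h
      exact ⟨i, Finset.mem_insert_of_mem hi, hfi⟩

lemma exists_maximal_ideal (hN : MonNoetherian A) (T : Set (Set A))
    (hT : ∀ J ∈ T, IsMIdeal J) (hne : T.Nonempty) :
    ∃ J ∈ T, ∀ K ∈ T, J ⊆ K → K = J := by
  by_contra h
  push_neg at h
  obtain ⟨J0, hJ0⟩ := hne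
  have h' : ∀ J : {J // J ∈ T}, ∃ K : {J // J ∈ T}, J.1 ⊆ K.1 ∧ K.1 ≠ J.1 := by
    intro ⟨J, hJ⟩
    obtain ⟨K, hK, hsub, hne'⟩ := h J hJ
    exact ⟨⟨K, hK⟩, hsub, hne'⟩
  choose g hg1 hg2 using h'
  let c : ℕ → {J // J ∈ T} := fun m => g^[m] ⟨J0, hJ0⟩
  have hstep : ∀ m, c (m + 1) = g (c m) := fun m =>
    Function.iterate_succ_apply' g m _
  obtain ⟨N, hNst⟩ := hN (fun m => (c m).1) (fun m => hT _ (c m).2)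
    (fun m => by show (c m).1 ⊆ (c (m+1)).1; rw [hstep]; exact hg1 (c m))
  have : (c (N + 1)).1 = (c N).1 := hNst (N + 1) (Nat.le_succ N)
  rw [hstep] at this
  exact hg2 (c N) this

end Helpers

/-- In a noetherian commutative pointed monoid, given a minimal primary decomposition
`I = q₁ ∩ ⋯ ∩ qₙ` with `qᵢ` being `pᵢ`-primary, the set `{p₁, …, pₙ}` is exactly the set
of primes occurring among the ideal quotients `(I : a) = {b | a * b ∈ I}`, `a ∈ A`. -/
theorem associated_primes_eq_prime_quotients
    {A : Type*} [CommMonoidWithZero A] (hN : MonNoetherian A)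
    (n : ℕ) (q p : Fin n → Set A)
    (hprimary : ∀ i, IsMPrimary (q i)) (hrad : ∀ i, mRadical (q i) = p i)
    (hdistinct : Function.Injective p)
    (hmin : ∀ i, ¬ (⋂ j, ⋂ (_ : j ≠ i), q j) ⊆ q i)
    (I : Set A) (hI : I = ⋂ i, q i) :
    {P : Set A | ∃ i, P = p i} =
      {P : Set A | IsMPrime P ∧ ∃ a : A, P = {b : A | a * b ∈ I}} := by
  classical
  have hIideal : IsMIdeal I := by
    subst hI
    constructor
    · exact Set.mem_iInter.2 fun i => (hprimary i).1.1
    · intro a x hx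
      exact Set.mem_iInter.2 fun i => (hprimary i).1.2 a x (Set.mem_iInter.1 hx i)
  have hmemI : ∀ x : A, x ∈ I ↔ ∀ i, x ∈ q i := by subst hI; exact fun x => Set.mem_iInter
  have key : ∀ i, ∃ a : A, IsMPrime {b : A | a * b ∈ I} ∧ {b : A | a * b ∈ I} = p i := by
    intro i
    set T : Set (Set A) :=
      {J | ∃ a : A, ((∀ j, j ≠ i → a ∈ q j) ∧ a ∉ q i) ∧ J = {b | a * b ∈ I}} with hT
    have hTid : ∀ J ∈ T, IsMIdeal J := by
      rintro J ⟨a, -, rfl⟩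
      exact colon_isMIdeal hIideal a
    have hTne : T.Nonempty := by
      obtain ⟨a, haj, hai⟩ := Set.not_subset.1 (hmin i)
      refine ⟨{b | a * b ∈ I}, a, ⟨?_, hai⟩, rfl⟩
      intro j hj
      exact Set.mem_iInter.1 (Set.mem_iInter.1 haj j) hj
    obtain ⟨J, ⟨a, ⟨haj, hai⟩, rfl⟩, hmax⟩ := exists_maximal_ideal hN T hTid hTne
    have haI : a ∉ I := fun h => hai ((hmemI a).1 h i)
    have hprime : IsMPrime {b : A | a * b ∈ I} := by
      refine ⟨colon_isMIdeal hIideal a, ?_, ?_⟩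
      · intro hu
        have h1 : (1:A) ∈ {b : A | a * b ∈ I} := hu ▸ Set.mem_univ 1
        rw [Set.mem_setOf_eq, mul_one] at h1
        exact haI h1
      · intro u y hxy
        by_cases hx : u ∈ {b : A | a * b ∈ I}
        · exact Or.inl hx
        · right
          have hax_memj : ∀ j, j ≠ i → a * u ∈ q j := fun j hj => by
            rw [mul_comm]; exact (hprimary j).1.2 u a (haj j hj)
          have haxq : a * u ∉ q i := by
            intro hq
            apply hx
            refine (hmemI _).2 (fun j => ?_)
            by_cases hj : j = i
            · rw [hj]; exact hq
            · exact hax_memj j hj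
          have hK : {b : A | (a*u) * b ∈ I} ∈ T := ⟨a*u, ⟨hax_memj, haxq⟩, rfl⟩
          have hsub : {b : A | a * b ∈ I} ⊆ {b : A | (a*u)*b ∈ I} := by
            intro b hb
            show (a*u)*b ∈ I
            have heq2 : (a*u)*b = u*(a*b) := by rw [mul_comm a u, mul_assoc]
            rw [heq2]; exact hIideal.2 u _ hb
          have heq := hmax _ hK hsub
          have hy : y ∈ {b : A | (a*u)*b ∈ I} := by
            show (a*u)*y ∈ I
            rw [mul_assoc]; exact hxy
          rwa [heq] at hy
    refine ⟨a, hprime, ?_⟩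
    apply Set.Subset.antisymm
    · intro b hb
      have hq : a * b ∈ q i := (hmemI _).1 hb i
      rcases (hprimary i).2.2 a b hq with h | ⟨m, hm, hbm⟩
      · exact absurd h hai
      · rw [← hrad i]; exact ⟨m, hm, hbm⟩
    · intro u hu
      rw [← hrad i] at hu
      obtain ⟨m, hm, hxm⟩ := hu
      apply prime_pow_mem hprime m u hm
      show a * u^m ∈ I
      apply (hmemI _).2
      intro j
      by_cases hj : j = i
      · subst hj; exact (hprimary j).1.2 a _ hxm
      · rw [mul_comm]; exact (hprimary j).1.2 _ a (haj j hj)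
  ext P
  simp only [Set.mem_setOf_eq]
  constructor
  · rintro ⟨i, rfl⟩
    obtain ⟨a, hpr, heq⟩ := key i
    exact ⟨heq ▸ hpr, a, heq.symm⟩
  · rintro ⟨hP, a, rfl⟩
    by_contra hcon
    push_neg at hcon
    have hsub : ∀ i, a ∉ q i → {b : A | a * b ∈ I} ⊆ p i := by
      intro i hi b hb
      rcases (hprimary i).2.2 a b ((hmemI _).1 hb i) with h | ⟨m, hm, hbm⟩
      · exact absurd h hi
      · rw [← hrad i]; exact ⟨m, hm, hbm⟩
    have hx : ∀ i : Fin n, ∃ x : A, a ∉ q i → (x ∈ p i ∧ x ∉ {b : A | a * b ∈ I}) := by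
      intro i
      by_cases hi : a ∉ q i
      · have hns : ¬ (p i ⊆ {b : A | a * b ∈ I}) := by
          intro hple
          exact hcon i (Set.Subset.antisymm (hsub i hi) hple)
        obtain ⟨x, hx1, hx2⟩ := Set.not_subset.1 hns
        exact ⟨x, fun _ => ⟨hx1, hx2⟩⟩
      · exact ⟨0, fun h => absurd h hi⟩
    choose x hxp using hx
    have hm : ∀ i : Fin n, ∃ m : ℕ, a ∉ q i → (1 ≤ m ∧ (x i)^m ∈ q i) := by
      intro i
      by_cases hi : a ∉ q i
      · have hpi := (hxp i hi).1
        rw [← hrad i] at hpi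
        obtain ⟨m, h1, h2⟩ := hpi
        exact ⟨m, fun _ => ⟨h1, h2⟩⟩
      · exact ⟨1, fun h => absurd h hi⟩
    choose m hmp using hm
    set s : Finset (Fin n) := Finset.univ.filter (fun i => a ∉ q i) with hs
    have hbP : (∏ i ∈ s, (x i)^(m i)) ∈ {c : A | a * c ∈ I} := by
      show a * ∏ i ∈ s, (x i)^(m i) ∈ I
      apply (hmemI _).2
      intro j
      by_cases hj : a ∈ q j
      · rw [mul_comm]; exact (hprimary j).1.2 _ a hj
      · have hjm : j ∈ s := Finset.mem_filter.2 ⟨Finset.mem_univ j, hj⟩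
        have hbq : (∏ i ∈ s, (x i)^(m i)) ∈ q j := by
          rw [← Finset.mul_prod_erase s _ hjm, mul_comm]
          exact (hprimary j).1.2 _ _ (hmp j hj).2
        exact (hprimary j).1.2 a _ hbq
    obtain ⟨i, his, hip⟩ := prod_mem_prime hP s (fun i => (x i)^(m i)) hbP
    have hiq : a ∉ q i := (Finset.mem_filter.1 his).2
    exact (hxp i hiq).2 (prime_pow_mem hP (m i) (x i) (hmp i hiq).1 hip)
end

section
/- A noetherian normal cancellative commutative pointed monoid A is the intersection of its localizations at height one primes: for every element x of the group completion A₀, x lies in (the image of) A if and only if for every height one prime ideal p of A there exist a ∈ A and s ∈ A ∖ p with x = a/s in A₀; equivalently, A = ⋂_p A_p inside A₀, the intersection ranging over all height one primes p of A. -/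
/-- A cancellative commutative pointed monoid is normal when it is integrally closed in
its group completion: any fraction `a / s` (with `s ≠ 0`) some power of which lies in `A`
already lies in `A`. -/
def MonNormal (A : Type*) [CommMonoidWithZero A] [IsCancelMulZero A] : Prop :=
  ∀ a s : A, s ≠ 0 → (∃ n : ℕ, 1 ≤ n ∧ ∃ c : A, a ^ n = c * s ^ n) → s ∣ a

/-- A prime `p` has height one: there is a prime strictly contained in `p`, and there is
no chain `p₀ ⊊ p₁ ⊊ p` of primes below `p`. -/
def HeightOne {A : Type*} [CommMonoidWithZero A] (p : Set A) : Prop :=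
  (∃ p₀ : Set A, IsMPrime p₀ ∧ p₀ ⊂ p) ∧
    ∀ p₀ p₁ : Set A, IsMPrime p₀ → IsMPrime p₁ → p₀ ⊂ p₁ → ¬ p₁ ⊂ p

/-!
If `s ∤ a`, the chain condition yields a colon ideal `p = (sA : t)` with `a ∣ t` and `s ∤ t`
that is maximal among the proper ones, hence prime, and `a / s ∉ A_p` because `s' ∉ p` means
`s ∤ t s'`. It remains to see that `p` has height one. Put `x = t / s`, so `x p ⊆ A`. If
`x p ⊆ p`, every `x ^ n s` lies in `A`; the chain condition then gives `x ^ m ∈ A` for some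
`m ≥ 1`, so `x ∈ A` by normality, i.e. `s ∣ t`. Hence `w = x b ∉ p` for some `b ∈ p`, and
`p A_p` is generated by `b / w`. A nonzero prime `q ⊆ p` not containing `b` would contain an
element divisible in `A_p` arbitrarily often by the non-unit `b / w`, which the chain condition
forbids; so `b ∈ q` and `q = p`.
-/

section

variable {A : Type*} [CommMonoidWithZero A]

lemma IsMPrime.one_notMem {p : Set A} (hp : IsMPrime p) : (1 : A) ∉ p := fun h1 =>
  hp.2.1 <| Set.eq_univ_of_forall fun x => by simpa using hp.1.2 x 1 h1

lemma isMPrime_singleton_zero [Nontrivial A] [NoZeroDivisors A] : IsMPrime ({0} : Set A) := by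
  refine ⟨⟨rfl, fun a x hx => by simp_all⟩, fun h => one_ne_zero (h ▸ Set.mem_univ (1 : A)),
    fun a b hab => mul_eq_zero.mp hab⟩

namespace MonNoetherian

lemma exists_maximal (hN : MonNoetherian A) {S : Set (Set A)} (hS : ∀ I ∈ S, IsMIdeal I)
    (hne : S.Nonempty) : ∃ I ∈ S, ∀ J ∈ S, I ⊆ J → J = I := by
  have hwf : WellFounded fun I J : S => J.1 ⊂ I.1 := by
    refine wellFounded_iff_isEmpty_descending_chain.2 ⟨fun ⟨f, hf⟩ => ?_⟩
    obtain ⟨N, hst⟩ := hN (fun n => f n) (fun n => hS _ (f n).2) fun n => (hf n).subset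
    exact (hf N).ne (hst (N + 1) N.le_succ).symm
  obtain ⟨⟨I, hI⟩, -, hmax⟩ := hwf.has_min Set.univ ⟨⟨_, hne.some_mem⟩, trivial⟩
  refine ⟨I, hI, fun J hJ hIJ => by_contra fun hJI => ?_⟩
  exact hmax ⟨J, hJ⟩ trivial (hIJ.ssubset_of_ne (Ne.symm hJI))

lemma exists_lt_dvd (hN : MonNoetherian A) (f : ℕ → A) : ∃ k n, k < n ∧ f k ∣ f n := by
  let K : ℕ → Set A := fun n => {e | ∃ k ≤ n, f k ∣ e}
  have hK : ∀ n, IsMIdeal (K n) := fun n =>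
    ⟨⟨0, n.zero_le, dvd_zero _⟩, fun a x ⟨k, hk, hdvd⟩ => ⟨k, hk, hdvd.mul_left a⟩⟩
  obtain ⟨N, hst⟩ := hN K hK fun n e ⟨k, hk, hdvd⟩ => ⟨k, hk.trans n.le_succ, hdvd⟩
  have hmem : f (N + 1) ∈ K N := hst (N + 1) N.le_succ ▸ ⟨N + 1, le_rfl, dvd_rfl⟩
  obtain ⟨k, hk, hdvd⟩ := hmem
  exact ⟨k, N + 1, Nat.lt_succ_of_le hk, hdvd⟩

end MonNoetherian

/-- The colon ideal `(sA : t)`, i.e. the `b` with `(t / s) b ∈ A`. -/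
def colon (s t : A) : Set A := {b | s ∣ t * b}

@[simp] lemma mem_colon {s t b : A} : b ∈ colon s t ↔ s ∣ t * b := Iff.rfl

lemma isMIdeal_colon (s t : A) : IsMIdeal (colon s t) :=
  ⟨by simp, fun a x hx => by simpa [mul_left_comm] using hx.mul_left a⟩

lemma colon_subset_colon_mul (s t v : A) : colon s t ⊆ colon s (t * v) := fun x hx => by
  simpa [mul_right_comm] using hx.mul_right v

lemma exists_isMPrime_colon (hN : MonNoetherian A) {a s : A} (hsa : ¬ s ∣ a) :
    ∃ t, a ∣ t ∧ ¬ s ∣ t ∧ IsMPrime (colon s t) := by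
  obtain ⟨_, ⟨t, hat, hst, rfl⟩, hmax⟩ := hN.exists_maximal
    (S := {I | ∃ t, a ∣ t ∧ ¬ s ∣ t ∧ I = colon s t})
    (by rintro _ ⟨t, -, -, rfl⟩; exact isMIdeal_colon s t) ⟨_, a, dvd_rfl, hsa, rfl⟩
  have h1 : (1 : A) ∉ colon s t := by simpa using hst
  refine ⟨t, hat, hst, isMIdeal_colon s t, fun h => h1 (h ▸ Set.mem_univ 1), ?_⟩
  intro u v huv
  by_cases hv : v ∈ colon s t
  · exact .inr hv
  -- `colon s t` is maximal among proper colon ideals and `colon s (t * v)` is proper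
  have heq := hmax _ ⟨t * v, hat.mul_right v, hv, rfl⟩ (colon_subset_colon_mul s t v)
  exact .inl (heq ▸ (by simpa [mul_assoc, mul_comm u] using huv : u ∈ colon s (t * v)))

lemma IsMPrime.mem_of_pow_mem {p : Set A} (hp : IsMPrime p) {x : A} :
    ∀ {n : ℕ}, x ^ n ∈ p → x ∈ p
  | 0, h => absurd (by simpa using h) hp.one_notMem
  | n + 1, h => (hp.2.2 _ _ (pow_succ x n ▸ h)).elim hp.mem_of_pow_mem id

/-- `b / w` generates the ideal `p A_p` of the localization `A_p`. -/
def IsLocalGenerator (p : Set A) (b w : A) : Prop :=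
  b ∈ p ∧ w ∉ p ∧ ∀ u ∈ p, ∃ c, u * w = c * b

section Cancel

variable [IsCancelMulZero A]

lemma MonNormal.dvd_of_forall_pow_dvd_pow_succ (hN : MonNoetherian A) (hnormal : MonNormal A)
    {s t : A} (hs : s ≠ 0) (h : ∀ n, s ^ n ∣ t ^ (n + 1)) : s ∣ t := by
  rcases eq_or_ne t 0 with rfl | ht
  · exact dvd_zero s
  choose w hw using h
  obtain ⟨k, n, hkn, e, he⟩ := hN.exists_lt_dvd w
  obtain ⟨m, rfl⟩ := Nat.exists_eq_add_of_lt hkn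
  refine hnormal t s hs ⟨m + 1, m.succ_pos, e, ?_⟩
  refine mul_left_cancel₀ (mul_ne_zero (pow_ne_zero (k + 1) ht) (pow_ne_zero k hs)) ?_
  calc t ^ (k + 1) * s ^ k * t ^ (m + 1) = t ^ (k + m + 1 + 1) * s ^ k := by
        rw [mul_right_comm, ← pow_add]; ring_nf
    _ = t ^ (k + 1) * s ^ k * (e * s ^ (m + 1)) := by
        rw [hw, he, hw k, add_assoc k m 1, pow_add s k (m + 1)]; ac_rfl

lemma exists_mul_eq_notMem_colon (hN : MonNoetherian A) (hnormal : MonNormal A)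
    {s t : A} (hs : s ≠ 0) (hst : ¬ s ∣ t) :
    ∃ b ∈ colon s t, ∃ w ∉ colon s t, t * b = s * w := by
  by_contra! h
  have hclosed {b w : A} (hb : b ∈ colon s t) (hbw : t * b = s * w) : w ∈ colon s t :=
    by_contra fun hw => h b hb w hw hbw
  have hpow : ∀ n, ∃ w ∈ colon s t, t ^ (n + 1) = s ^ n * w := by
    intro n
    induction n with
    | zero => exact ⟨t, hclosed (by simp) (mul_comm t s), by simp⟩
    | succ n ih =>
      obtain ⟨w, ⟨c, hc⟩, heq⟩ := ih
      refine ⟨c, hclosed ⟨c, hc⟩ hc, ?_⟩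
      rw [pow_succ, heq, mul_right_comm, mul_assoc, hc, pow_succ, mul_assoc]
  exact hst <| hnormal.dvd_of_forall_pow_dvd_pow_succ hN hs fun n =>
    let ⟨w, _, hw⟩ := hpow n; ⟨w, hw⟩

lemma exists_isLocalGenerator_colon (hN : MonNoetherian A) (hnormal : MonNormal A)
    {s t : A} (hs : s ≠ 0) (hst : ¬ s ∣ t) : ∃ b w, IsLocalGenerator (colon s t) b w := by
  obtain ⟨b, hb, w, hw, htb⟩ := exists_mul_eq_notMem_colon hN hnormal hs hst
  refine ⟨b, w, hb, hw, fun u ⟨c, hc⟩ => ⟨c, mul_left_cancel₀ hs ?_⟩⟩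
  calc s * (u * w) = u * (t * b) := by rw [htb]; ac_rfl
    _ = s * (c * b) := by rw [← mul_assoc, mul_comm u, hc, mul_assoc]

lemma MonNoetherian.not_forall_mul_eq_mul_succ (hN : MonNoetherian A) {p : Set A}
    (hp : IsMPrime p) {b w : A} (hb : b ∈ p) (hw : w ∉ p) {u : ℕ → A} (hu : u 0 ≠ 0) :
    ¬ ∀ n, u n * w = u (n + 1) * b := by
  intro hrec
  have hpow : ∀ k m, u k * w ^ m = u (k + m) * b ^ m := by
    intro k m
    induction m with
    | zero => simp
    | succ m ih => rw [pow_succ, ← mul_assoc, ih, mul_right_comm, hrec, pow_succ]; ac_rfl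
  have hw0 : w ≠ 0 := fun h => hw (h ▸ hp.1.1)
  have hune : ∀ n, u n ≠ 0 := fun n hn =>
    pow_ne_zero n hw0 (by simpa [hu, hn] using hpow 0 n)
  obtain ⟨k, n, hkn, e, he⟩ := hN.exists_lt_dvd u
  obtain ⟨m, rfl⟩ := Nat.exists_eq_add_of_lt hkn
  have hwm : w ^ (m + 1) = e * b ^ (m + 1) :=
    mul_left_cancel₀ (hune k) (by rw [hpow k (m + 1), ← add_assoc, he, mul_assoc])
  refine hw (hp.mem_of_pow_mem (hwm ▸ hp.1.2 e _ ?_))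
  rw [pow_succ]
  exact hp.1.2 _ _ hb

lemma IsLocalGenerator.subset_of_mem (hN : MonNoetherian A) {p : Set A} (hp : IsMPrime p)
    {b w : A} (hgen : IsLocalGenerator p b w) {q : Set A} (hq : IsMPrime q) (hqp : q ⊆ p)
    {x : A} (hx : x ∈ q) (hx0 : x ≠ 0) : p ⊆ q := by
  obtain ⟨hb, hw, hdiv⟩ := hgen
  have hwq : w ∉ q := fun h => hw (hqp h)
  by_cases hbq : b ∈ q
  · intro u hu
    obtain ⟨c, hc⟩ := hdiv u hu
    exact (hq.2.2 u w (hc ▸ hq.1.2 c b hbq)).resolve_right hwq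
  -- otherwise `x` could be divided by `b / w` indefinitely inside `q`
  have hstep : ∀ u ∈ q, ∃ c ∈ q, u * w = c * b := fun u hu => by
    obtain ⟨c, hc⟩ := hdiv u (hqp hu)
    exact ⟨c, (hq.2.2 c b (hc ▸ mul_comm w u ▸ hq.1.2 w u hu)).resolve_right hbq, hc⟩
  choose! g hgq hg using hstep
  have hmem : ∀ n, g^[n] x ∈ q := fun n => by
    induction n with
    | zero => exact hx
    | succ n ih => exact Function.iterate_succ_apply' g n x ▸ hgq _ ih
  refine absurd (fun n => ?_) (hN.not_forall_mul_eq_mul_succ hp hb hw (u := (g^[·] x)) hx0)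
  rw [Function.iterate_succ_apply']
  exact hg _ (hmem n)

lemma heightOne_colon (hN : MonNoetherian A) (hnormal : MonNormal A) {s t : A} (hs : s ≠ 0)
    (hst : ¬ s ∣ t) (hp : IsMPrime (colon s t)) : HeightOne (colon s t) := by
  have : Nontrivial A := ⟨⟨s, 0, hs⟩⟩
  obtain ⟨b, w, hgen⟩ := exists_isLocalGenerator_colon hN hnormal hs hst
  refine ⟨⟨{0}, isMPrime_singleton_zero, ?_⟩, fun p₀ p₁ h₀ h₁ h01 h1p => ?_⟩
  · rw [Set.ssubset_iff_of_subset (by simp [(isMIdeal_colon s t).1])]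
    exact ⟨s, by simp, hs⟩
  obtain ⟨x, hx₁, hx₀⟩ := Set.exists_of_ssubset h01
  have hx0 : x ≠ 0 := fun h => hx₀ (h ▸ h₀.1.1)
  exact h1p.not_subset (hgen.subset_of_mem hN hp h₁ h1p.subset hx₁ hx0)

end Cancel

end

/-- A noetherian normal cancellative commutative pointed monoid is the intersection of its
localizations at height one primes: an element `a / s` (with `s ≠ 0`) of the group
completion lies in `A` (i.e. `s ∣ a`) if and only if for every height one prime `p` it can
be written as a fraction `a' / s'` with `a' ∈ A` and `s' ∉ p` (equality of fractions being
`a * s' = a' * s`). -/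
theorem normal_monoid_intersection_of_height_one_localizations
    {A : Type*} [CommMonoidWithZero A] [IsCancelMulZero A]
    (hN : MonNoetherian A) (hnormal : MonNormal A) :
    ∀ a s : A, s ≠ 0 →
      (s ∣ a ↔ ∀ p : Set A, IsMPrime p → HeightOne p →
        ∃ a' s' : A, s' ∉ p ∧ a * s' = a' * s) := by
  intro a s hs
  constructor
  · rintro ⟨c, rfl⟩ p hp -
    exact ⟨c, 1, hp.one_notMem, by rw [mul_one, mul_comm]⟩
  intro h
  by_contra hsa
  obtain ⟨t, ⟨d, rfl⟩, hst, hp⟩ := exists_isMPrime_colon hN hsa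
  obtain ⟨a', s', hs', heq⟩ := h _ hp (heightOne_colon hN hnormal hs hst hp)
  refine hs' ⟨a' * d, ?_⟩
  rw [mul_right_comm, heq]
  ac_rfl
end
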